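/- arXiv:2311.18050 — 2 statements merged into one kernel-verified Lean document; each statement's English description precedes it below -/
import Mathlib

section
/- Let Ξ = (M, Ξ, α) be a semistable polarised state, let F be the smallest face of cone(Ξ) containing α, let K ⊆ M_ℚ be the ℚ-span of F ∩ Ξ, let M'_ℚ = M_ℚ/K with quotient map q, and let Ξ' = (M'_ℚ, q(Ξ \ F), 0) be the slice. Then the injection q^∨: (M'_ℚ)^∨ → M_ℚ^∨ induces a bijection between ℚ-Filt(Ξ') = {λ' : ⟨λ', q(χ)⟩ ≥ 0 for all χ ∈ Ξ \ F} and ℚ-Filt(Ξ) = {λ ∈ M_ℚ^∨ : ⟨λ, Ξ⟩ ≥ 0, ⟨λ, α⟩ = 0}. -/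
/-- The cone generated by a subset `S` of a `ℚ`-vector space. -/
def qCone {V : Type*} [AddCommGroup V] [Module ℚ V] (S : Set V) : Set V :=
  {x | ∃ (t : Finset V) (c : V → ℚ), (↑t : Set V) ⊆ S ∧ (∀ v, 0 ≤ c v) ∧
    x = ∑ v ∈ t, c v • v}

/-- `F` is a face of `C`: it is cut out on `C` by a linear form nonnegative on `C`. -/
def IsFaceOf {V : Type*} [AddCommGroup V] [Module ℚ V] (C F : Set V) : Prop :=
  ∃ μ : V →ₗ[ℚ] ℚ, (∀ x ∈ C, 0 ≤ μ x) ∧ F = C ∩ {x | μ x = 0}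

lemma subset_qCone {V : Type*} [AddCommGroup V] [Module ℚ V] (S : Set V) : S ⊆ qCone S := by
  intro x hx
  classical
  exact ⟨{x}, fun v => if v = x then 1 else 0, by simpa using hx,
    fun v => by by_cases h : v = x <;> simp [h], by simp⟩

lemma nonneg_on_qCone {V : Type*} [AddCommGroup V] [Module ℚ V] (S : Set V)
    (μ : V →ₗ[ℚ] ℚ) (h : ∀ x ∈ S, 0 ≤ μ x) : ∀ x ∈ qCone S, 0 ≤ μ x := by
  rintro x ⟨t, c, hts, hc, rfl⟩
  rw [map_sum]
  refine Finset.sum_nonneg fun v hv => ?_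
  rw [map_smul]
  exact mul_nonneg (hc v) (h v (hts hv))

/-- Proposition 5.1.13: slicing a semistable polarised state induces a bijection
on rational filtrations. Here `F` is the smallest face of `cone Ξ` containing `α`,
`K` is the span of `F ∩ Ξ`, and precomposition with the quotient map
`q : M_ℚ → M_ℚ/K` is a bijection from `ℚ-Filt(Ξ')` onto `ℚ-Filt(Ξ)`. -/
theorem stmt6 {V : Type*} [AddCommGroup V] [Module ℚ V] [FiniteDimensional ℚ V]
    (Ξ : Finset V) (α : V) (hα : α ∈ qCone (↑Ξ : Set V)) (F : Set V)
    (hF : IsFaceOf (qCone (↑Ξ : Set V)) F) (hαF : α ∈ F)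
    (hmin : ∀ F', IsFaceOf (qCone (↑Ξ : Set V)) F' → α ∈ F' → F ⊆ F') :
    Set.BijOn
      (fun l : (V ⧸ Submodule.span ℚ (F ∩ (↑Ξ : Set V))) →ₗ[ℚ] ℚ =>
        l.comp (Submodule.span ℚ (F ∩ (↑Ξ : Set V))).mkQ)
      {l | ∀ χ ∈ Ξ, χ ∉ F → 0 ≤ l ((Submodule.span ℚ (F ∩ (↑Ξ : Set V))).mkQ χ)}
      {l : V →ₗ[ℚ] ℚ | (∀ χ ∈ Ξ, 0 ≤ l χ) ∧ l α = 0} := by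
  set K := Submodule.span ℚ (F ∩ (↑Ξ : Set V)) with hK
  -- α ∈ K
  have hαK : α ∈ K := by
    obtain ⟨μ, hμ, hFeq⟩ := hF
    obtain ⟨t, c, hts, hc, rfl⟩ := hα
    have hμα : μ (∑ v ∈ t, c v • v) = 0 := by
      have := hαF; rw [hFeq] at this; exact this.2
    rw [map_sum] at hμα
    have hterm : ∀ v ∈ t, (0:ℚ) ≤ μ (c v • v) := fun v hv => by
      rw [map_smul]
      exact mul_nonneg (hc v) (hμ v (subset_qCone _ (hts hv)))
    have hzero : ∀ v ∈ t, μ (c v • v) = 0 :=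
      (Finset.sum_eq_zero_iff_of_nonneg hterm).mp hμα
    refine Submodule.sum_mem _ fun v hv => ?_
    rcases eq_or_ne (c v) 0 with h0 | h0
    · simp [h0]
    · refine Submodule.smul_mem _ _ (Submodule.subset_span ⟨?_, hts hv⟩)
      have := hzero v hv
      rw [map_smul, smul_eq_mul, mul_eq_zero] at this
      rcases this with h | h
      · exact absurd h h0
      · rw [hFeq]; exact ⟨subset_qCone _ (hts hv), h⟩
  have hFΞK : F ∩ (↑Ξ : Set V) ⊆ (K : Set V) := Submodule.subset_span
  refine ⟨?_, ?_, ?_⟩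
  · -- MapsTo
    intro l hl
    constructor
    · intro χ hχ
      by_cases hχF : χ ∈ F
      · have : χ ∈ K := hFΞK ⟨hχF, hχ⟩
        simp [Submodule.mkQ_apply, (Submodule.Quotient.mk_eq_zero K).mpr this]
      · exact hl χ hχ hχF
    · simp [Submodule.mkQ_apply, (Submodule.Quotient.mk_eq_zero K).mpr hαK]
  · -- InjOn
    intro l1 _ l2 _ h
    refine LinearMap.ext fun x => ?_
    obtain ⟨y, rfl⟩ := K.mkQ_surjective x
    exact DFunLike.congr_fun h y
  · -- SurjOn
    intro l hl
    obtain ⟨hl1, hl2⟩ := hl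
    -- l vanishes on F
    have hlF : ∀ x ∈ F, l x = 0 := by
      have hface : IsFaceOf (qCone (↑Ξ : Set V)) (qCone (↑Ξ : Set V) ∩ {x | l x = 0}) :=
        ⟨l, nonneg_on_qCone _ l hl1, rfl⟩
      have hαin : α ∈ qCone (↑Ξ : Set V) ∩ {x | l x = 0} := ⟨hα, hl2⟩
      intro x hx
      exact (hmin _ hface hαin hx).2
    have hKle : K ≤ LinearMap.ker l := by
      rw [hK, Submodule.span_le]
      rintro x ⟨hxF, _⟩
      exact hlF x hxF
    refine ⟨K.liftQ l hKle, ?_, ?_⟩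
    · intro χ hχ _
      simpa using hl1 χ hχ
    · ext x; simp
end

section
/- Let M be a finitely generated abelian group, Ξ ⊆ M_ℚ a finite set, N = M_ℚ^∨ with a rational inner product, and suppose x corresponds to the state Ξ as in the convex-geometric algorithm: set Ξ₀ = Ξ, N₀ = N, let F₀ be the smallest face of cone(Ξ₀) containing 0 (i.e., the maximal linear subspace contained in cone(Ξ₀) intersected with the cone), N₁ = F₀^⊥ ⊆ N₀, and λ₀ ∈ N₁ the unique minimizer of the norm subject to (λ₀, α) ≥ 1 for all α ∈ Ξ₀ \ F₀. Then with Ξ₁ = {p₁(α) : α ∈ Ξ₀, (λ₀, α) = 1} ⊆ N₁ (p₁ the orthogonal projection N₀ → N₁), one has λ₀ ∈ cone(Ξ₁). -/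
/-!
If `l` were not in the cone over `Ξ₁`, Farkas' lemma (proved by Fourier–Motzkin elimination)
would give `w` with `B w (p a) ≤ 0` for the active `a` and `0 < B w l`. Since `p` is
`B`-self-adjoint, `u = p w ∈ N₁` satisfies `B u a ≤ 0` on the active constraints, and the
inactive ones have slack, so `l - ε • u` is feasible for small `ε > 0`. As
`B (l - ε • u) (l - ε • u) = B l l - ε (2 B u l - ε B u u)` with `0 < B u l`, it beats `l`.
-/

open Filter Topology

lemma qCone_eq_hull {V : Type*} [AddCommGroup V] [Module ℚ V] (S : Set V) :
    qCone S = PointedCone.hull ℚ S := by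
  ext x
  constructor
  · rintro ⟨t, c, hts, hc, rfl⟩
    exact Submodule.sum_mem _ fun v hv =>
      (PointedCone.hull ℚ S).smul_mem (hc v) (PointedCone.subset_hull (hts hv))
  · rw [SetLike.mem_coe, PointedCone.mem_hull_set]
    rintro ⟨c, hcS, hc, rfl⟩
    exact ⟨c.support, c, hcS, hc, rfl⟩

namespace PointedCone

variable {K V W : Type*} [Field K] [AddCommGroup V] [Module K V] [AddCommGroup W] [Module K W]

def kerProjAlong (f : V →ₗ[K] K) (a : V) : V →ₗ[K] V :=
  LinearMap.id - (f a)⁻¹ • f.smulRight a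

lemma kerProjAlong_apply (f : V →ₗ[K] K) (a x : V) :
    kerProjAlong f a x = x - (f x / f a) • a := by
  simp [kerProjAlong, smul_smul, div_eq_inv_mul]

lemma kerProjAlong_self {f : V →ₗ[K] K} {a : V} (ha : f a ≠ 0) : kerProjAlong f a a = 0 := by
  rw [kerProjAlong_apply, div_self ha, one_smul, sub_self]

lemma apply_kerProjAlong (p : W →ₗ[K] V →ₗ[K] K) {u w : W} (hwa : p w a ≠ 0) (x : V) :
    p u (kerProjAlong (p w) a x) = p (u - (p u a / p w a) • w) x := by
  simp only [kerProjAlong_apply, map_sub, map_smul, LinearMap.sub_apply, LinearMap.smul_apply,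
    smul_eq_mul]
  field_simp

variable [LinearOrder K] [IsStrictOrderedRing K] {f : V →ₗ[K] K} {a : V} {S : Set V}

lemma hull_image_kerProjAlong_le (ha : 0 < f a) (hS : ∀ s ∈ S, f s ≤ 0) :
    hull K (kerProjAlong f a '' S) ≤ hull K (insert a S) := by
  refine Submodule.span_le.mpr ?_
  rintro _ ⟨s, hs, rfl⟩
  rw [kerProjAlong_apply, sub_eq_add_neg, ← neg_smul]
  exact add_mem (subset_hull (Set.mem_insert_of_mem a hs))
    ((hull K _).smul_mem (neg_nonneg.mpr (div_nonpos_of_nonpos_of_nonneg (hS s hs) ha.le))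
      (subset_hull (Set.mem_insert a S)))

lemma mem_hull_insert_of_kerProjAlong_mem (ha : 0 < f a) (hS : ∀ s ∈ S, f s ≤ 0) {l : V}
    (hl : 0 ≤ f l) (h : kerProjAlong f a l ∈ hull K (kerProjAlong f a '' S)) :
    l ∈ hull K (insert a S) := by
  have hsplit : l = kerProjAlong f a l + (f l / f a) • a := by
    rw [kerProjAlong_apply, sub_add_cancel]
  rw [hsplit]
  exact add_mem (hull_image_kerProjAlong_le ha hS h)
    ((hull K _).smul_mem (div_nonneg hl ha.le) (subset_hull (Set.mem_insert a S)))

theorem exists_separating_of_notMem_hull (p : W →ₗ[K] V →ₗ[K] K)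
    (hp : ∀ x, x ≠ 0 → ∃ w, p w x ≠ 0) (S : Finset V) {l : V} (hl : l ∉ hull K (S : Set V)) :
    ∃ w, (∀ s ∈ S, p w s ≤ 0) ∧ 0 < p w l := by
  classical
  induction h : S.card using Nat.strong_induction_on generalizing S l with
  | _ n ih =>
    rcases S.eq_empty_or_nonempty with rfl | ⟨a, ha⟩
    · obtain ⟨w, hw⟩ := hp l fun h0 => hl (h0 ▸ zero_mem _)
      rcases hw.lt_or_gt with hneg | hpos
      · exact ⟨-w, by simp, by simpa using hneg⟩
      · exact ⟨w, by simp, hpos⟩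
    have hS : S = insert a (S.erase a) := (Finset.insert_erase ha).symm
    have hcard : (S.erase a).card < n := h ▸ Finset.card_erase_lt_of_mem ha
    have hl' : l ∉ hull K ((S.erase a : Finset V) : Set V) := fun h' =>
      hl (Submodule.span_mono (Finset.coe_subset.mpr (Finset.erase_subset a S)) h')
    obtain ⟨w, hwS, hwl⟩ := ih _ hcard _ hl' rfl
    rcases le_or_gt (p w a) 0 with hwa | hwa
    · refine ⟨w, fun s hs => ?_, hwl⟩
      rcases eq_or_ne s a with rfl | hsa
      · exact hwa
      · exact hwS s (Finset.mem_erase.mpr ⟨hsa, hs⟩)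
    -- Fourier–Motzkin elimination of `a`.
    set π := kerProjAlong (p w) a
    have hπl : π l ∉ hull K (((S.erase a).image π : Finset V) : Set V) := by
      intro h'
      rw [Finset.coe_image] at h'
      refine hl ?_
      rw [hS, Finset.coe_insert]
      exact mem_hull_insert_of_kerProjAlong_mem hwa hwS hwl.le h'
    obtain ⟨u, huS, hul⟩ := ih _ (Finset.card_image_le.trans_lt hcard) _ hπl rfl
    refine ⟨u - (p u a / p w a) • w, fun s hs => ?_, ?_⟩
    · rw [← apply_kerProjAlong p hwa.ne']
      rcases eq_or_ne s a with rfl | hsa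
      · simp [kerProjAlong_self hwa.ne']
      · exact huS _ (Finset.mem_image_of_mem π (Finset.mem_erase.mpr ⟨hsa, hs⟩))
    · rwa [← apply_kerProjAlong p hwa.ne']

end PointedCone

section Descent

variable {K V : Type*} [Field K] [LinearOrder K] [IsStrictOrderedRing K] [TopologicalSpace K]
  [OrderTopology K] [AddCommGroup V] [Module K V] {B : V →ₗ[K] V →ₗ[K] K}

lemma eventually_one_le_apply_sub_smul {l u a : V} (hla : 1 ≤ B l a)
    (hua : B l a = 1 → B u a ≤ 0) :
    ∀ᶠ ε in 𝓝[>] (0 : K), 1 ≤ B (l - ε • u) a := by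
  have hlin : ∀ ε : K, B (l - ε • u) a = B l a - ε * B u a := fun ε => by simp
  simp only [hlin]
  rcases hla.eq_or_lt with hla | hla
  · filter_upwards [self_mem_nhdsWithin] with ε (hε : 0 < ε)
    nlinarith [hua hla.symm]
  · have : Tendsto (fun ε : K => ε * B u a) (𝓝[>] 0) (𝓝 0) :=
      ((continuous_mul_const _).tendsto' 0 0 (zero_mul _)).mono_left nhdsWithin_le_nhds
    filter_upwards [this.eventually_lt_const (sub_pos.mpr hla)] with ε hε
    linarith

lemma eventually_apply_sub_smul_self_lt (hsymm : ∀ x y, B x y = B y x) {l u : V}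
    (hul : 0 < B u l) : ∀ᶠ ε in 𝓝[>] (0 : K), B (l - ε • u) (l - ε • u) < B l l := by
  have hexpand : ∀ ε : K,
      B (l - ε • u) (l - ε • u) = B l l - ε * (2 * B u l - ε * B u u) := fun ε => by
    simp only [map_sub, map_smul, LinearMap.sub_apply, LinearMap.smul_apply, smul_eq_mul,
      hsymm l u]
    ring
  have : Tendsto (fun ε : K => 2 * B u l - ε * B u u) (𝓝[>] 0) (𝓝 (2 * B u l)) :=
    ((continuous_const.sub (continuous_mul_const _)).tendsto' 0 _ (by simp)).mono_left
      nhdsWithin_le_nhds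
  filter_upwards [self_mem_nhdsWithin, this.eventually_const_lt (by positivity)]
    with ε (hε : 0 < ε) hpos
  rw [hexpand]
  nlinarith

lemma eventually_feasible_and_lt (hsymm : ∀ x y, B x y = B y x) {C : Set V} (hC : C.Finite)
    {l u : V} (hfeas : ∀ a ∈ C, 1 ≤ B l a) (hact : ∀ a ∈ C, B l a = 1 → B u a ≤ 0)
    (hul : 0 < B u l) :
    ∀ᶠ ε in 𝓝[>] (0 : K),
      (∀ a ∈ C, 1 ≤ B (l - ε • u) a) ∧ B (l - ε • u) (l - ε • u) < B l l :=
  ((eventually_all_finite hC).mpr fun a ha =>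
    eventually_one_le_apply_sub_smul (hfeas a ha) (hact a ha)).and
    (eventually_apply_sub_smul_self_lt hsymm hul)

end Descent

section Projection

variable {R V : Type*} [CommRing R] [AddCommGroup V] [Module R V] {B : V →ₗ[R] V →ₗ[R] R}
  {N : Set V} {p : V →ₗ[R] V}

lemma apply_proj_left (hp : ∀ v, ∀ w ∈ N, B (v - p v) w = 0) (v : V) {x : V} (hx : x ∈ N) :
    B (p v) x = B v x := by
  have := hp v x hx
  rw [map_sub, LinearMap.sub_apply, sub_eq_zero] at this
  exact this.symm

lemma apply_proj_comm (hsymm : ∀ x y, B x y = B y x) (hpN : ∀ v, p v ∈ N)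
    (hp : ∀ v, ∀ w ∈ N, B (v - p v) w = 0) (v x : V) : B (p v) x = B v (p x) := by
  rw [hsymm, ← apply_proj_left hp x (hpN v), hsymm, apply_proj_left hp v (hpN x)]

end Projection

theorem stmt15_general {V : Type*} [AddCommGroup V] [Module ℚ V]
    (B : V →ₗ[ℚ] V →ₗ[ℚ] ℚ) (hsymm : ∀ x y, B x y = B y x)
    (hpos : ∀ x, x ≠ 0 → 0 < B x x)
    (Ξ : Finset V)
    (F₀ : Set V)
    (N₁ : Set V) (hN₁ : N₁ = {v | ∀ w ∈ F₀, B v w = 0})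
    (l : V) (hlN : l ∈ N₁)
    (hfeas : ∀ a ∈ Ξ, a ∉ F₀ → 1 ≤ B l a)
    (hmin : ∀ μ ∈ N₁, (∀ a ∈ Ξ, a ∉ F₀ → 1 ≤ B μ a) → B l l ≤ B μ μ)
    (p : V →ₗ[ℚ] V) (hp1 : ∀ v, p v ∈ N₁)
    (hp2 : ∀ v, ∀ w ∈ N₁, B (v - p v) w = 0) :
    l ∈ qCone (⇑p '' {a : V | a ∈ Ξ ∧ B l a = 1}) := by
  classical
  have hΞ₁ : ⇑p '' {a | a ∈ Ξ ∧ B l a = 1} = ((Ξ.filter (B l · = 1)).image p : Finset V) := by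
    simp
  rw [hΞ₁, qCone_eq_hull]
  by_contra hl
  obtain ⟨w, hwΞ₁, hwl⟩ := PointedCone.exists_separating_of_notMem_hull B
    (fun x hx => ⟨x, (hpos x hx).ne'⟩) _ hl
  have hul : 0 < B (p w) l := by rwa [apply_proj_left hp2 w hlN]
  have hact : ∀ a ∈ Ξ, B l a = 1 → B (p w) a ≤ 0 := fun a ha hla => by
    rw [apply_proj_comm hsymm hp1 hp2]
    exact hwΞ₁ _ (Finset.mem_image_of_mem p (Finset.mem_filter.mpr ⟨ha, hla⟩))
  obtain ⟨ε, hfeasε, hlt⟩ := (eventually_feasible_and_lt hsymm (C := {a | a ∈ Ξ ∧ a ∉ F₀})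
    (Ξ.finite_toSet.subset fun a ha => ha.1) (fun a ha => hfeas a ha.1 ha.2)
    (fun a ha => hact a ha.1) hul).exists
  have hμN : l - ε • p w ∈ N₁ := by
    subst hN₁
    intro x hx
    simp [hlN x hx, hp1 w x hx]
  exact (hmin _ hμN fun a ha haF => hfeasε a ⟨ha, haF⟩).not_gt hlt

/-- First step of the convex-geometric algorithm (Section 1.4 / Theorem 5.1.19):
let `F₀` be the smallest face of `cone Ξ₀` containing `0` (its lineality part),
`N₁ = F₀^⊥`, and `λ₀ ∈ N₁` the norm-minimizer subject to `(λ₀, a) ≥ 1` for all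
`a ∈ Ξ₀ \ F₀`. With `p` the orthogonal projection onto `N₁` and
`Ξ₁ = p({a ∈ Ξ₀ : (λ₀, a) = 1})`, one has `λ₀ ∈ cone Ξ₁`. -/
theorem stmt15 {V : Type*} [AddCommGroup V] [Module ℚ V] [FiniteDimensional ℚ V]
    (B : V →ₗ[ℚ] V →ₗ[ℚ] ℚ) (hsymm : ∀ x y, B x y = B y x)
    (hpos : ∀ x, x ≠ 0 → 0 < B x x)
    (Ξ : Finset V)
    (F₀ : Set V)
    (hF₀ : F₀ = {x | x ∈ qCone (↑Ξ : Set V) ∧ -x ∈ qCone (↑Ξ : Set V)})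
    (N₁ : Set V) (hN₁ : N₁ = {v | ∀ w ∈ F₀, B v w = 0})
    (l : V) (hlN : l ∈ N₁)
    (hfeas : ∀ a ∈ Ξ, a ∉ F₀ → 1 ≤ B l a)
    (hmin : ∀ μ ∈ N₁, (∀ a ∈ Ξ, a ∉ F₀ → 1 ≤ B μ a) → B l l ≤ B μ μ)
    (p : V →ₗ[ℚ] V) (hp1 : ∀ v, p v ∈ N₁)
    (hp2 : ∀ v, ∀ w ∈ N₁, B (v - p v) w = 0) :
    l ∈ qCone (⇑p '' {a : V | a ∈ Ξ ∧ B l a = 1}) :=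
  stmt15_general B hsymm hpos Ξ F₀ N₁ hN₁ l hlN hfeas hmin p hp1 hp2
end
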